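/- arXiv:math/0601195 — 3 statements merged into one kernel-verified Lean document; each statement's English description precedes it below -/
import Mathlib

section
/- Let a : [0,1] → ℝ be a C^m function (m ≥ 1) with a(x) = 0 for x ≤ 1-δ and a^{(m)}(x) ≥ 0 for x ≥ 1-δ. Then for each integer n with 1 ≤ n < m there exists a constant C > 0 such that |a^{(n)}(x)| ≤ C · a(x)^{(m-n)/m} for all x ∈ [1-δ, 1]. -/
/-!
Taylor expansion at `c`, where all derivatives of `a` vanish, shows `a⁽ᵏ⁾ ≥ 0` on `[c, b]`;
Taylor expansion of `a` at any `y ∈ [c, x]` then gives `a⁽ⁱ⁾(y) (x - y)ⁱ ≤ i! a(x)`.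
Expanding `a⁽ᵏ⁾` at `y = max c (x - h)` with `h = a(x)^(1/m)`, every Taylor coefficient and the
remainder are `O(h^(m-k)) = O(a(x)^((m-k)/m))`.
-/

open Set Finset Nat Filter Topology

theorem iteratedDeriv_iteratedDeriv {𝕜 F : Type*} [NontriviallyNormedField 𝕜]
    [NormedAddCommGroup F] [NormedSpace 𝕜 F] {f : 𝕜 → F} (j k : ℕ) :
    iteratedDeriv j (iteratedDeriv k f) = iteratedDeriv (j + k) f := by
  simp only [iteratedDeriv_eq_iterate, Function.iterate_add_apply]

theorem iteratedDeriv_eq_zero_of_forall_le_eq_zero {F : Type*} [NormedAddCommGroup F]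
    [NormedSpace ℝ F] {m k : ℕ} {f : ℝ → F} {c x : ℝ} (hf : ContDiff ℝ m f)
    (hf0 : ∀ y ≤ c, f y = 0) (hk : k ≤ m) (hx : x ≤ c) : iteratedDeriv k f x = 0 := by
  have hIio : Iio c ⊆ {y | iteratedDeriv k f y = 0} := fun y hy => by
    have : f =ᶠ[𝓝 y] fun _ => 0 :=
      eventually_of_mem (Iio_mem_nhds hy) fun z hz => hf0 z (le_of_lt hz)
    simpa using this.iteratedDeriv_eq k
  have hclosed : IsClosed {y | iteratedDeriv k f y = 0} :=
    isClosed_eq (hf.continuous_iteratedDeriv k (by exact_mod_cast hk)) continuous_const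
  exact hclosed.closure_subset_iff.2 hIio (by rwa [closure_Iio])

theorem exists_eq_taylor_sum_add_lagrange {r : ℕ} {f : ℝ → ℝ} {x₀ x : ℝ} (hf : ContDiff ℝ r f)
    (hx : x₀ ≤ x) : ∃ t ∈ Icc x₀ x, f x =
      ∑ j ∈ range r, iteratedDeriv j f x₀ * (x - x₀) ^ j / j ! +
        iteratedDeriv r f t * (x - x₀) ^ r / r ! := by
  rcases r with _ | n
  · exact ⟨x, right_mem_Icc.2 hx, by simp⟩
  rcases hx.eq_or_lt with rfl | hlt
  · exact ⟨x₀, left_mem_Icc.2 le_rfl, by simp [Finset.sum_range_succ']⟩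
  obtain ⟨t, ht, hrem⟩ :=
    taylor_mean_remainder_lagrange_iteratedDeriv hlt.ne hf.contDiffOn
  rw [uIoo_of_lt hlt] at ht
  refine ⟨t, Ioo_subset_Icc_self ht, ?_⟩
  rw [← sub_eq_iff_eq_add', ← hrem, taylor_within_apply]
  congr 1
  refine Finset.sum_congr rfl fun j hj => ?_
  rw [iteratedDerivWithin_eq_iteratedDeriv (uniqueDiffOn_uIcc hlt.ne)
    (hf.contDiffAt.of_le (by exact_mod_cast (Finset.mem_range.1 hj).le)) left_mem_uIcc,
    smul_eq_mul]
  ring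

theorem exists_iteratedDeriv_eq_taylor_sum_add_lagrange {m k : ℕ} {f : ℝ → ℝ} {x₀ x : ℝ}
    (hf : ContDiff ℝ m f) (hk : k ≤ m) (hx : x₀ ≤ x) : ∃ t ∈ Icc x₀ x, iteratedDeriv k f x =
      ∑ j ∈ range (m - k), iteratedDeriv (j + k) f x₀ * (x - x₀) ^ j / j ! +
        iteratedDeriv m f t * (x - x₀) ^ (m - k) / (m - k)! := by
  have hg : ContDiff ℝ (m - k : ℕ) (iteratedDeriv k f) := by
    rw [iteratedDeriv_eq_iterate]
    exact ContDiff.iterate_deriv' _ k (by rwa [Nat.sub_add_cancel hk])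
  obtain ⟨t, ht, htaylor⟩ := exists_eq_taylor_sum_add_lagrange hg hx
  refine ⟨t, ht, ?_⟩
  simpa only [iteratedDeriv_iteratedDeriv, Nat.sub_add_cancel hk] using htaylor

section

variable {m : ℕ} {a : ℝ → ℝ} {c b : ℝ}
  (ha : ContDiff ℝ m a) (hvanish : ∀ x ≤ c, a x = 0)
  (hsign : ∀ x ∈ Icc c b, 0 ≤ iteratedDeriv m a x)
include ha hvanish hsign

theorem iteratedDeriv_nonneg_of_mem_Icc {k : ℕ} {x : ℝ} (hk : k ≤ m) (hx : x ∈ Icc c b) :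
    0 ≤ iteratedDeriv k a x := by
  obtain ⟨t, ht, htaylor⟩ := exists_iteratedDeriv_eq_taylor_sum_add_lagrange ha hk hx.1
  have hsum : ∑ j ∈ range (m - k), iteratedDeriv (j + k) a c * (x - c) ^ j / j ! = 0 :=
    Finset.sum_eq_zero fun j hj => by
      rw [iteratedDeriv_eq_zero_of_forall_le_eq_zero ha hvanish (by simp at hj; omega) le_rfl]
      simp
  have hrem := hsign t ⟨ht.1, ht.2.trans hx.2⟩
  have hxc := sub_nonneg.2 hx.1
  rw [htaylor, hsum, zero_add]
  positivity

theorem iteratedDeriv_mul_pow_div_factorial_le {i : ℕ} {x y : ℝ} (hi : i < m) (hy : c ≤ y)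
    (hyx : y ≤ x) (hx : x ≤ b) : iteratedDeriv i a y * (x - y) ^ i / i ! ≤ a x := by
  obtain ⟨t, ht, htaylor⟩ := exists_iteratedDeriv_eq_taylor_sum_add_lagrange ha (zero_le m) hyx
  simp only [Nat.sub_zero, add_zero, iteratedDeriv_zero] at htaylor
  have hxy := sub_nonneg.2 hyx
  have hrem := hsign t ⟨hy.trans ht.1, ht.2.trans hx⟩
  rw [htaylor]
  refine le_add_of_le_of_nonneg ?_ (by positivity)
  refine Finset.single_le_sum (f := fun j => iteratedDeriv j a y * (x - y) ^ j / j !)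
    (fun j hj => ?_) (Finset.mem_range.2 hi)
  have := iteratedDeriv_nonneg_of_mem_Icc ha hvanish hsign (Finset.mem_range.1 hj).le
    ⟨hy, hyx.trans hx⟩
  positivity

theorem iteratedDeriv_max_sub_mul_pow_div_factorial_le {j k : ℕ} {x h : ℝ} (hjk : j + k < m)
    (hx : x ∈ Icc c b) (hh : 0 < h) (hxh : a x ≤ h ^ m) :
    iteratedDeriv (j + k) a (max c (x - h)) * (x - max c (x - h)) ^ j / j ! ≤
      (j + k)! / j ! * h ^ (m - k) := by
  rcases le_total (x - h) c with hle | hle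
  · rw [max_eq_left hle, iteratedDeriv_eq_zero_of_forall_le_eq_zero ha hvanish hjk.le le_rfl,
      zero_mul, zero_div]
    positivity
  rw [max_eq_right hle, sub_sub_cancel, div_mul_eq_mul_div]
  refine div_le_div_of_nonneg_right ?_ (Nat.cast_nonneg _)
  have hcoeff := iteratedDeriv_mul_pow_div_factorial_le ha hvanish hsign hjk hle (by linarith) hx.2
  rw [sub_sub_cancel, div_le_iff₀ (by positivity)] at hcoeff
  refine le_of_mul_le_mul_right ?_ (pow_pos hh k)
  calc iteratedDeriv (j + k) a (x - h) * h ^ j * h ^ k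
      = iteratedDeriv (j + k) a (x - h) * h ^ (j + k) := by ring
    _ ≤ a x * (j + k)! := hcoeff
    _ ≤ h ^ m * (j + k)! := by gcongr
    _ = (j + k)! * h ^ (m - k) * h ^ k := by
      rw [mul_assoc, ← pow_add, Nat.sub_add_cancel (by omega), mul_comm]

theorem iteratedDeriv_le_mul_pow_of_le_pow {k : ℕ} {M x h : ℝ} (hk : k ≤ m)
    (hM : ∀ t ∈ Icc c b, iteratedDeriv m a t ≤ M) (hx : x ∈ Icc c b) (hh : 0 < h)
    (hxh : a x ≤ h ^ m) :
    iteratedDeriv k a x ≤ (∑ j ∈ range (m - k), ((j + k)! / j ! : ℝ) + M) * h ^ (m - k) := by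
  set y := max c (x - h)
  have hyx : y ≤ x := max_le hx.1 (by linarith)
  have hxy : x - y ≤ h := by linarith [le_max_right c (x - h)]
  obtain ⟨t, ht, htaylor⟩ := exists_iteratedDeriv_eq_taylor_sum_add_lagrange ha hk hyx
  have htM := hM t ⟨(le_max_left _ _).trans ht.1, ht.2.trans hx.2⟩
  have hM0 : 0 ≤ iteratedDeriv m a t := hsign t ⟨(le_max_left _ _).trans ht.1, ht.2.trans hx.2⟩
  rw [htaylor, add_mul, Finset.sum_mul]
  refine add_le_add (Finset.sum_le_sum fun j hj => ?_) ?_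
  · exact iteratedDeriv_max_sub_mul_pow_div_factorial_le ha hvanish hsign
      (by simp at hj; omega) hx hh hxh
  calc iteratedDeriv m a t * (x - y) ^ (m - k) / (m - k)!
      ≤ iteratedDeriv m a t * (x - y) ^ (m - k) :=
        div_le_self (by have := sub_nonneg.2 hyx; positivity)
          (Nat.one_le_cast.2 (Nat.factorial_pos _))
    _ ≤ M * h ^ (m - k) := by
      gcongr
      exact hM0.trans htM

theorem iteratedDeriv_eq_zero_of_apply_eq_zero {k : ℕ} {x : ℝ} (hk : k < m) (hx : x ∈ Icc c b)
    (hax : a x = 0) : iteratedDeriv k a x = 0 := by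
  refine iteratedDeriv_eq_zero_of_forall_le_eq_zero ha (fun y hy => ?_) hk.le le_rfl
  rcases le_total y c with hyc | hcy
  · exact hvanish y hyc
  have hle := iteratedDeriv_mul_pow_div_factorial_le ha hvanish hsign (i := 0)
    (by omega) hcy hy hx.2
  have hnonneg :=
    iteratedDeriv_nonneg_of_mem_Icc ha hvanish hsign (zero_le m) ⟨hcy, hy.trans hx.2⟩
  simp only [iteratedDeriv_zero, pow_zero, mul_one, Nat.factorial_zero, Nat.cast_one,
    div_one] at hle hnonneg
  linarith

theorem exists_iteratedDeriv_le_mul_rpow {k : ℕ} (hk : k < m) :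
    ∃ C > 0, ∀ x ∈ Icc c b, iteratedDeriv k a x ≤ C * a x ^ (((m : ℝ) - k) / m) := by
  obtain ⟨M, hM⟩ := isCompact_Icc.exists_bound_of_continuousOn
    (ha.continuous_iteratedDeriv m le_rfl).continuousOn
  have hM' : ∀ t ∈ Icc c b, iteratedDeriv m a t ≤ max M 0 := fun t ht =>
    (le_abs_self _).trans ((hM t ht).trans (le_max_left _ _))
  set S := ∑ j ∈ range (m - k), ((j + k)! / j ! : ℝ)
  have hS : 0 < S := Finset.sum_pos (fun j _ => by positivity) (by simp; omega)
  refine ⟨S + max M 0, by positivity, fun x hx => ?_⟩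
  have hax : 0 ≤ a x := by
    simpa using iteratedDeriv_nonneg_of_mem_Icc ha hvanish hsign (zero_le m) hx
  rcases hax.eq_or_lt with hzero | hpos
  · rw [iteratedDeriv_eq_zero_of_apply_eq_zero ha hvanish hsign hk hx hzero.symm]
    positivity
  set h := a x ^ ((m : ℝ)⁻¹)
  have hhm : h ^ m = a x := Real.rpow_inv_natCast_pow hax (by omega)
  have hpow : h ^ (m - k) = a x ^ (((m : ℝ) - k) / m) := by
    rw [← Real.rpow_mul_natCast hax, Nat.cast_sub hk.le, inv_mul_eq_div]
  rw [← hpow]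
  exact iteratedDeriv_le_mul_pow_of_le_pow ha hvanish hsign hk.le hM' hx
    (Real.rpow_pos_of_pos hpos _) hhm.ge

end

theorem stmt_0_general (m n : ℕ) (hnm : n < m)
    (δ : ℝ)
    (a : ℝ → ℝ) (ha : ContDiff ℝ m a)
    (hvanish : ∀ x : ℝ, x ≤ 1 - δ → a x = 0)
    (hsign : ∀ x ∈ Set.Icc (1 - δ) 1, 0 ≤ iteratedDeriv m a x) :
    ∃ C > 0, ∀ x ∈ Set.Icc (1 - δ) 1,
      |iteratedDeriv n a x| ≤ C * a x ^ (((m : ℝ) - n) / m) := by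
  obtain ⟨C, hC, hbound⟩ := exists_iteratedDeriv_le_mul_rpow ha hvanish hsign hnm
  refine ⟨C, hC, fun x hx => ?_⟩
  rw [abs_of_nonneg (iteratedDeriv_nonneg_of_mem_Icc ha hvanish hsign hnm.le hx)]
  exact hbound x hx

theorem stmt_0 (m n : ℕ) (hn : 1 ≤ n) (hnm : n < m)
    (δ : ℝ) (hδ : 0 < δ) (hδ1 : δ < 1)
    (a : ℝ → ℝ) (ha : ContDiff ℝ m a)
    (hvanish : ∀ x : ℝ, x ≤ 1 - δ → a x = 0)
    (hsign : ∀ x ∈ Set.Icc (1 - δ) 1, 0 ≤ iteratedDeriv m a x) :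
    ∃ C > 0, ∀ x ∈ Set.Icc (1 - δ) 1,
      |iteratedDeriv n a x| ≤ C * a x ^ (((m : ℝ) - n) / m) :=
  stmt_0_general m n hnm δ a ha hvanish hsign
end

section
/- Let a : [0,1] → ℝ be C^m with a(x) = 0 for x ≤ 1-δ and a^{(m)} ≥ 0 on [1-δ, 1], where m ≥ 1. Then for x ∈ [1-δ, 1] and any y with 1-δ < y < x, one has |a'(x)| ≤ ((m-1)/(x-y)) · a(x) + M · (x-y)^{m-1}/(m-2)!, where M = sup_{[1-δ,1]} a^{(m)}. -/
/-!
Since `a` vanishes to the left of `c = 1 - δ`, Taylor's formula with integral remainder at `c`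
gives `a x = ∫_c^x (x-t)^(m-1)/(m-1)! a⁽ᵐ⁾ t dt` and `a' x = ∫_c^x (x-t)^(m-2)/(m-2)! a⁽ᵐ⁾ t dt`;
in particular `a' x ≥ 0`. Split the second integral at `y`. For `t ≤ y` the kernel
`(x-t)^(m-2)/(m-2)!` is at most `(m-1)/(x-y)` times `(x-t)^(m-1)/(m-1)!`, so by `a⁽ᵐ⁾ ≥ 0`
that part is at most `(m-1)/(x-y) · a x`. For `t ≥ y` the kernel is at most `(x-y)^(m-2)/(m-2)!`
and `a⁽ᵐ⁾ ≤ M`.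
-/

open Set intervalIntegral
open scoped Nat

section Taylor

variable {E : Type*} [NormedAddCommGroup E] [NormedSpace ℝ E] {f : ℝ → E} {c : ℝ}

theorem iteratedDeriv_eq_zero_of_eqOn_Iio {n k : ℕ} (hf : ContDiff ℝ n f) (hk : k ≤ n)
    (hc : EqOn f 0 (Iio c)) : iteratedDeriv k f c = 0 := by
  have hopen : EqOn (iteratedDeriv k f) 0 (Iio c) := fun t ht => by
    simp [(hc.eventuallyEq_of_mem (Iio_mem_nhds ht)).iteratedDeriv_eq k]
  have := hopen.closure (hf.continuous_iteratedDeriv k (by exact_mod_cast hk)) continuous_const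
  rw [closure_Iio] at this
  exact this (mem_Iic.2 le_rfl)

theorem eq_integral_iteratedDeriv_of_eqOn_Iio [CompleteSpace E] {n : ℕ}
    (hf : ContDiff ℝ (n + 1) f) (hc : EqOn f 0 (Iio c)) (x : ℝ) :
    f x = ∫ t in c..x, ((x - t) ^ n / n !) • iteratedDeriv (n + 1) f t := by
  rcases eq_or_ne c x with rfl | hcx
  · simpa using iteratedDeriv_eq_zero_of_eqOn_Iio (k := 0) hf (Nat.zero_le _) hc
  have hs : UniqueDiffOn ℝ (uIcc c x) := uniqueDiffOn_uIcc hcx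
  have hwithin {k : ℕ} (hk : k ≤ n + 1) {t : ℝ} (ht : t ∈ uIcc c x) :
      iteratedDerivWithin k f (uIcc c x) t = iteratedDeriv k f t :=
    iteratedDerivWithin_eq_iteratedDeriv hs (hf.contDiffAt.of_le (mod_cast hk)) ht
  have htaylor := taylor_integral_remainder (x₀ := c) (x := x) (n := n) (mod_cast hf.contDiffOn)
  have hpoly : taylorWithinEval f n (uIcc c x) c x = 0 := by
    rw [taylor_within_apply]
    refine Finset.sum_eq_zero fun k hk => ?_
    have hk : k ≤ n + 1 := (Finset.mem_range.1 hk).le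
    rw [hwithin hk left_mem_uIcc, iteratedDeriv_eq_zero_of_eqOn_Iio hf hk hc, smul_zero]
  rw [hpoly, sub_zero] at htaylor
  rw [htaylor]
  exact integral_congr fun t ht => by simp only [hwithin le_rfl ht]

end Taylor

theorem pow_div_factorial_le_mul_pow_succ_div_factorial (n : ℕ) {d s : ℝ} (hd : 0 < d)
    (hds : d ≤ s) : s ^ n / n ! ≤ (n + 1) / d * (s ^ (n + 1) / (n + 1)!) := by
  have hs : 0 ≤ s ^ n / n ! := div_nonneg (pow_nonneg (hd.le.trans hds) _) (by positivity)
  calc s ^ n / n ! ≤ s ^ n / n ! * (s / d) := le_mul_of_one_le_right hs ((one_le_div hd).2 hds)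
    _ = (n + 1) / d * (s ^ (n + 1) / (n + 1)!) := by
      rw [Nat.factorial_succ]; push_cast; field_simp; ring

section SplitIntegral

open MeasureTheory

variable {D : ℝ → ℝ} {c x y M : ℝ} (n : ℕ)

theorem integral_pow_mul_nonneg (hcx : c ≤ x) (hD : ∀ t ∈ Icc c x, 0 ≤ D t) :
    0 ≤ ∫ t in c..x, (x - t) ^ n / n ! * D t :=
  integral_nonneg hcx fun t ht =>
    mul_nonneg (div_nonneg (pow_nonneg (sub_nonneg.2 ht.2) _) (by positivity)) (hD t ht)

theorem intervalIntegrable_pow_mul {a b : ℝ} (hD : IntervalIntegrable D volume a b) :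
    IntervalIntegrable (fun t => (x - t) ^ n / n ! * D t) volume a b :=
  hD.continuousOn_mul (by fun_prop)

theorem integral_pow_mul_le_of_le_left (hDcy : IntervalIntegrable D volume c y)
    (hDyx : IntervalIntegrable D volume y x) (hcy : c ≤ y) (hyx : y < x)
    (hD : ∀ t ∈ Icc c x, 0 ≤ D t) :
    ∫ t in c..y, (x - t) ^ n / n ! * D t ≤
      (n + 1) / (x - y) * ∫ t in c..x, (x - t) ^ (n + 1) / (n + 1)! * D t := by
  have htail : 0 ≤ ∫ t in y..x, (x - t) ^ (n + 1) / (n + 1)! * D t :=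
    integral_pow_mul_nonneg (n + 1) hyx.le fun t ht => hD t ⟨hcy.trans ht.1, ht.2⟩
  calc ∫ t in c..y, (x - t) ^ n / n ! * D t
      ≤ ∫ t in c..y, (n + 1) / (x - y) * ((x - t) ^ (n + 1) / (n + 1)! * D t) := by
        refine integral_mono_on hcy (intervalIntegrable_pow_mul n hDcy)
          ((intervalIntegrable_pow_mul (n + 1) hDcy).const_mul _) fun t ht => ?_
        rw [← mul_assoc]
        refine mul_le_mul_of_nonneg_right ?_ (hD t ⟨ht.1, ht.2.trans hyx.le⟩)
        exact pow_div_factorial_le_mul_pow_succ_div_factorial n (sub_pos.2 hyx)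
          (by linarith [ht.2])
    _ = (n + 1) / (x - y) * ∫ t in c..y, (x - t) ^ (n + 1) / (n + 1)! * D t :=
        integral_const_mul _ _
    _ ≤ (n + 1) / (x - y) * ∫ t in c..x, (x - t) ^ (n + 1) / (n + 1)! * D t := by
        rw [← integral_add_adjacent_intervals (intervalIntegrable_pow_mul (n + 1) hDcy)
          (intervalIntegrable_pow_mul (n + 1) hDyx)]
        exact mul_le_mul_of_nonneg_left (le_add_of_nonneg_right htail)
          (div_nonneg (by positivity) (sub_pos.2 hyx).le)

theorem integral_pow_mul_le_of_le_right (hDyx : IntervalIntegrable D volume y x) (hyx : y ≤ x)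
    (hD : ∀ t ∈ Icc y x, 0 ≤ D t) (hDM : ∀ t ∈ Icc y x, D t ≤ M) :
    ∫ t in y..x, (x - t) ^ n / n ! * D t ≤ M * (x - y) ^ (n + 1) / n ! := by
  calc ∫ t in y..x, (x - t) ^ n / n ! * D t ≤ ∫ _ in y..x, (x - y) ^ n / n ! * M := by
        refine integral_mono_on hyx (intervalIntegrable_pow_mul n hDyx) intervalIntegrable_const
          fun t ht => mul_le_mul ?_ (hDM t ht) (hD t ht)
            (div_nonneg (pow_nonneg (sub_nonneg.2 hyx) _) (by positivity))
        gcongr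
        · exact sub_nonneg.2 ht.2
        · exact ht.1
    _ = M * (x - y) ^ (n + 1) / n ! := by
        rw [intervalIntegral.integral_const, smul_eq_mul]; ring

theorem integral_pow_mul_le_split (hDcy : IntervalIntegrable D volume c y)
    (hDyx : IntervalIntegrable D volume y x) (hcy : c ≤ y) (hyx : y < x)
    (hD : ∀ t ∈ Icc c x, 0 ≤ D t) (hDM : ∀ t ∈ Icc y x, D t ≤ M) :
    ∫ t in c..x, (x - t) ^ n / n ! * D t ≤
      (n + 1) / (x - y) * (∫ t in c..x, (x - t) ^ (n + 1) / (n + 1)! * D t)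
        + M * (x - y) ^ (n + 1) / n ! := by
  rw [← integral_add_adjacent_intervals (intervalIntegrable_pow_mul n hDcy)
    (intervalIntegrable_pow_mul n hDyx)]
  exact add_le_add (integral_pow_mul_le_of_le_left n hDcy hDyx hcy hyx hD)
    (integral_pow_mul_le_of_le_right n hDyx hyx.le
      (fun t ht => hD t ⟨hcy.trans ht.1, ht.2⟩) hDM)

end SplitIntegral

theorem stmt_1_general (m : ℕ) (hm : 2 ≤ m)
    (δ : ℝ)
    (a : ℝ → ℝ) (ha : ContDiff ℝ m a)
    (hvanish : ∀ x : ℝ, x ≤ 1 - δ → a x = 0)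
    (hsign : ∀ x ∈ Set.Icc (1 - δ) 1, 0 ≤ iteratedDeriv m a x)
    (M : ℝ) (hM : ∀ x ∈ Set.Icc (1 - δ) 1, iteratedDeriv m a x ≤ M)
    (x y : ℝ) (hx : x ∈ Set.Icc (1 - δ) 1) (hy : 1 - δ < y) (hyx : y < x) :
    |deriv a x| ≤ ((m : ℝ) - 1) / (x - y) * a x
      + M * (x - y) ^ (m - 1) / (Nat.factorial (m - 2)) := by
  obtain ⟨n, rfl⟩ : ∃ n, m = n + 2 := ⟨m - 2, by omega⟩
  have hflat : EqOn a 0 (Iio (1 - δ)) := fun t ht => hvanish t ht.le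
  have hflat' : EqOn (deriv a) 0 (Iio (1 - δ)) := fun t ht => by
    simpa using (hflat.eventuallyEq_of_mem (Iio_mem_nhds ht)).deriv_eq
  have hA := eq_integral_iteratedDeriv_of_eqOn_Iio (n := n + 1) ha hflat x
  have hB := eq_integral_iteratedDeriv_of_eqOn_Iio (n := n) ha.deriv' hflat' x
  rw [← iteratedDeriv_succ'] at hB
  simp only [smul_eq_mul] at hA hB
  have hcont : Continuous (iteratedDeriv (n + 2) a) := ha.continuous_iteratedDeriv _ le_rfl
  have hD : ∀ t ∈ Icc (1 - δ) x, 0 ≤ iteratedDeriv (n + 2) a t :=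
    fun t ht => hsign t ⟨ht.1, ht.2.trans hx.2⟩
  have hDM : ∀ t ∈ Icc y x, iteratedDeriv (n + 2) a t ≤ M :=
    fun t ht => hM t ⟨hy.le.trans ht.1, ht.2.trans hx.2⟩
  rw [abs_of_nonneg (hB ▸ integral_pow_mul_nonneg n (hy.le.trans hyx.le) hD), hA, hB]
  have hm1 : ((n + 2 : ℕ) : ℝ) - 1 = n + 1 := by push_cast; ring
  rw [hm1, Nat.add_sub_cancel, show n + 2 - 1 = n + 1 from rfl]
  exact integral_pow_mul_le_split n (hcont.intervalIntegrable _ _) (hcont.intervalIntegrable _ _)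
    hy.le hyx hD hDM

theorem stmt_1 (m : ℕ) (hm : 2 ≤ m)
    (δ : ℝ) (hδ : 0 < δ) (hδ1 : δ < 1)
    (a : ℝ → ℝ) (ha : ContDiff ℝ m a)
    (hvanish : ∀ x : ℝ, x ≤ 1 - δ → a x = 0)
    (hsign : ∀ x ∈ Set.Icc (1 - δ) 1, 0 ≤ iteratedDeriv m a x)
    (M : ℝ) (hM : ∀ x ∈ Set.Icc (1 - δ) 1, iteratedDeriv m a x ≤ M)
    (x y : ℝ) (hx : x ∈ Set.Icc (1 - δ) 1) (hy : 1 - δ < y) (hyx : y < x) :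
    |deriv a x| ≤ ((m : ℝ) - 1) / (x - y) * a x
      + M * (x - y) ^ (m - 1) / (Nat.factorial (m - 2)) :=
  stmt_1_general m hm δ a ha hvanish hsign M hM x y hx hy hyx
end

section
/- Let u ∈ H¹₀((0,1)) (complex-valued) satisfy, in the weak sense, -u'' + 2iλ a u + (k² - λ²) u = f + g' with f, g ∈ L²((0,1)), where λ ∈ ℝ, k ∈ ℕ, k ≥ |λ|, and a ∈ C([0,1]) with a ≥ 0. Then ‖u‖_{L²} ≤ C(‖f‖_{L²} + ‖g‖_{L²}) for an absolute constant C (independent of λ, k, a). -/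
open MeasureTheory Complex

/-- The weak formulation of `-u'' + 2iλ a u + (k² - λ²) u = f + g'` on `(0,1)`
with Dirichlet boundary conditions, tested against `C¹` functions vanishing at
the endpoints. -/
def WeakSol1D (lam : ℝ) (k : ℕ) (a : ℝ → ℝ) (u f g : ℝ → ℂ) : Prop :=
  ∀ φ : ℝ → ℂ, ContDiff ℝ 1 φ → φ 0 = 0 → φ 1 = 0 →
    (∫ x in (0:ℝ)..1, deriv u x * (starRingEnd ℂ) (deriv φ x)
        + ((2 * Complex.I * lam * a x : ℂ) + (k:ℂ)^2 - (lam:ℂ)^2) * u x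
            * (starRingEnd ℂ) (φ x))
      = ∫ x in (0:ℝ)..1, f x * (starRingEnd ℂ) (φ x)
          - g x * (starRingEnd ℂ) (deriv φ x)

/-!
Test the weak formulation with `φ = u` and take real parts: the damping term `2iλa|u|²` is purely
imaginary, so `‖u'‖² + (k² - λ²)‖u‖² ≤ ‖f‖‖u‖ + ‖g‖‖u'‖` by Cauchy–Schwarz. Since `k ≥ |λ|` and
`‖u‖ ≤ ‖u'‖` (Poincaré, from `u(x) = ∫₀ˣ u'`), this gives `‖u'‖ ≤ ‖f‖ + ‖g‖`, so `C = 1` works.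
-/

open Set

section CauchySchwarz

variable {α E F : Type*} [MeasurableSpace α] {μ : Measure α}
  [NormedAddCommGroup E] [NormedAddCommGroup F] {f : α → E} {g : α → F}

-- `f` itself need not be measurable, but `‖f‖ = √(‖f‖ ^ 2)` is.
theorem memLp_two_norm_of_integrable_norm_sq (hf : Integrable (fun x => ‖f x‖ ^ 2) μ) :
    MemLp (fun x => ‖f x‖) 2 μ := by
  have hmeas : AEStronglyMeasurable (fun x => ‖f x‖) μ := by
    simpa [Real.sqrt_sq (norm_nonneg _)] using
      Real.continuous_sqrt.comp_aestronglyMeasurable hf.aestronglyMeasurable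
  exact (memLp_two_iff_integrable_sq hmeas).2 hf

theorem integrable_norm_mul_norm_of_integrable_norm_sq
    (hf : Integrable (fun x => ‖f x‖ ^ 2) μ) (hg : Integrable (fun x => ‖g x‖ ^ 2) μ) :
    Integrable (fun x => ‖f x‖ * ‖g x‖) μ :=
  (memLp_two_norm_of_integrable_norm_sq hf).integrable_mul
    (memLp_two_norm_of_integrable_norm_sq hg)

theorem integral_norm_mul_norm_le_sqrt_mul_sqrt
    (hf : Integrable (fun x => ‖f x‖ ^ 2) μ) (hg : Integrable (fun x => ‖g x‖ ^ 2) μ) :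
    ∫ x, ‖f x‖ * ‖g x‖ ∂μ ≤ √(∫ x, ‖f x‖ ^ 2 ∂μ) * √(∫ x, ‖g x‖ ^ 2 ∂μ) := by
  have h := integral_mul_le_Lp_mul_Lq_of_nonneg Real.HolderConjugate.two_two
    (ae_of_all _ fun x => norm_nonneg (f x)) (ae_of_all _ fun x => norm_nonneg (g x))
    (by simpa using memLp_two_norm_of_integrable_norm_sq hf)
    (by simpa using memLp_two_norm_of_integrable_norm_sq hg)
  simpa only [Real.rpow_two, ← Real.sqrt_eq_rpow] using h

end CauchySchwarz

section Interval

variable {E F : Type*} [NormedAddCommGroup E] [NormedAddCommGroup F] {f : ℝ → E} {g : ℝ → F}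
  {a b : ℝ}

theorem intervalIntegral.integral_norm_mul_norm_le_sqrt_mul_sqrt (hab : a ≤ b)
    (hf : IntervalIntegrable (fun x => ‖f x‖ ^ 2) volume a b)
    (hg : IntervalIntegrable (fun x => ‖g x‖ ^ 2) volume a b) :
    ∫ x in a..b, ‖f x‖ * ‖g x‖ ≤ √(∫ x in a..b, ‖f x‖ ^ 2) * √(∫ x in a..b, ‖g x‖ ^ 2) := by
  simp only [intervalIntegral.integral_of_le hab]
  exact _root_.integral_norm_mul_norm_le_sqrt_mul_sqrt hf.1 hg.1

theorem IntervalIntegrable.norm_mul_norm_of_norm_sq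
    (hf : IntervalIntegrable (fun x => ‖f x‖ ^ 2) volume a b)
    (hg : IntervalIntegrable (fun x => ‖g x‖ ^ 2) volume a b) :
    IntervalIntegrable (fun x => ‖f x‖ * ‖g x‖) volume a b :=
  ⟨integrable_norm_mul_norm_of_integrable_norm_sq hf.1 hg.1,
    integrable_norm_mul_norm_of_integrable_norm_sq hf.2 hg.2⟩

end Interval

section Poincare

variable {E : Type*} [NormedAddCommGroup E] [NormedSpace ℝ E] [CompleteSpace E] {u : ℝ → E}

theorem norm_le_integral_norm_deriv_of_eq_zero {a b x : ℝ} (hu : ContDiff ℝ 1 u) (hua : u a = 0)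
    (hx : x ∈ Icc a b) : ‖u x‖ ≤ ∫ t in a..b, ‖deriv u t‖ := by
  have hu' : Continuous (deriv u) := hu.continuous_deriv le_rfl
  have hftc : ∫ t in a..x, deriv u t = u x := by
    rw [intervalIntegral.integral_deriv_eq_sub
      (fun t _ => (hu.differentiable one_ne_zero).differentiableAt)
      (hu'.intervalIntegrable a x), hua, sub_zero]
  calc ‖u x‖ = ‖∫ t in a..x, deriv u t‖ := by rw [hftc]
    _ ≤ ∫ t in a..x, ‖deriv u t‖ := intervalIntegral.norm_integral_le_integral_norm hx.1
    _ ≤ ∫ t in a..b, ‖deriv u t‖ :=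
      intervalIntegral.integral_mono_interval le_rfl hx.1 hx.2
        (ae_of_all _ fun t => norm_nonneg _) (hu'.norm.intervalIntegrable a b)

theorem integral_norm_sq_le_integral_norm_deriv_sq (hu : ContDiff ℝ 1 u) (hu0 : u 0 = 0) :
    ∫ x in (0:ℝ)..1, ‖u x‖ ^ 2 ≤ ∫ x in (0:ℝ)..1, ‖deriv u x‖ ^ 2 := by
  set D := ∫ x in (0:ℝ)..1, ‖deriv u x‖ ^ 2
  have hD : 0 ≤ D := intervalIntegral.integral_nonneg zero_le_one fun x _ => by positivity
  have hu'2 : IntervalIntegrable (fun x => ‖deriv u x‖ ^ 2) volume 0 1 :=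
    ((hu.continuous_deriv le_rfl).norm.pow 2).intervalIntegrable 0 1
  have hL1 : ∫ t in (0:ℝ)..1, ‖deriv u t‖ ≤ √D := by
    simpa using intervalIntegral.integral_norm_mul_norm_le_sqrt_mul_sqrt zero_le_one hu'2
      (intervalIntegrable_const (c := ‖(1:ℝ)‖ ^ 2))
  calc ∫ x in (0:ℝ)..1, ‖u x‖ ^ 2 ≤ ∫ x in (0:ℝ)..1, D := by
        refine intervalIntegral.integral_mono_on zero_le_one
          ((hu.continuous.norm.pow 2).intervalIntegrable 0 1) intervalIntegrable_const
          fun x hx => ?_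
        calc ‖u x‖ ^ 2 ≤ √D ^ 2 := by
              gcongr
              exact (norm_le_integral_norm_deriv_of_eq_zero hu hu0 hx).trans hL1
          _ = D := Real.sq_sqrt hD
    _ = D := by simp

end Poincare

theorem re_mul_conj_add_coeff_mul_conj (lam r : ℝ) (k : ℕ) (z w : ℂ) :
    (w * (starRingEnd ℂ) w + ((2 * I * lam * r : ℂ) + (k:ℂ)^2 - (lam:ℂ)^2) * z
      * (starRingEnd ℂ) z).re = ‖w‖ ^ 2 + ((k:ℝ)^2 - lam^2) * ‖z‖ ^ 2 := by
  rw [Complex.sq_norm, Complex.sq_norm, Complex.normSq_apply, Complex.normSq_apply]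
  simp only [pow_two, add_re, mul_re, conj_re, conj_im, mul_neg, sub_neg_eq_add, sub_re, re_ofNat,
    I_re, mul_zero, im_ofNat, I_im, mul_one, sub_self, ofReal_re, zero_mul, mul_im, add_zero,
    ofReal_im, zero_add, natCast_re, natCast_im, sub_zero, sub_im, add_im, add_right_inj]
  ring

theorem WeakSol1D.energy_identity {lam : ℝ} {k : ℕ} {a : ℝ → ℝ} {u f g : ℝ → ℂ}
    (hweak : WeakSol1D lam k a u f g) (ha : ContinuousOn a (Icc 0 1)) (hu : ContDiff ℝ 1 u)
    (hu0 : u 0 = 0) (hu1 : u 1 = 0) :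
    (∫ x in (0:ℝ)..1, ‖deriv u x‖ ^ 2) + ((k:ℝ)^2 - lam^2) * ∫ x in (0:ℝ)..1, ‖u x‖ ^ 2
      = (∫ x in (0:ℝ)..1, f x * (starRingEnd ℂ) (u x)
          - g x * (starRingEnd ℂ) (deriv u x)).re := by
  have hu' : Continuous (deriv u) := hu.continuous_deriv le_rfl
  have hint : IntervalIntegrable (fun x => deriv u x * (starRingEnd ℂ) (deriv u x)
      + ((2 * I * lam * a x : ℂ) + (k:ℂ)^2 - (lam:ℂ)^2) * u x * (starRingEnd ℂ) (u x))
      volume 0 1 := by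
    have hu_c := hu.continuous
    refine ContinuousOn.intervalIntegrable ?_
    rw [uIcc_of_le zero_le_one]
    fun_prop
  rw [← hweak u hu hu0 hu1, ← RCLike.re_eq_complex_re, ← intervalIntegral.intervalIntegral_re hint]
  simp only [RCLike.re_eq_complex_re, re_mul_conj_add_coeff_mul_conj]
  rw [intervalIntegral.integral_add, intervalIntegral.integral_const_mul]
  · exact (hu'.norm.pow 2).intervalIntegrable 0 1
  · exact ((hu.continuous.norm.pow 2).intervalIntegrable 0 1).const_mul _

theorem re_integral_mul_conj_sub_mul_conj_le {a b : ℝ} (hab : a ≤ b) {f g v w : ℝ → ℂ}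
    (hf : IntervalIntegrable (fun x => ‖f x‖ ^ 2) volume a b)
    (hg : IntervalIntegrable (fun x => ‖g x‖ ^ 2) volume a b)
    (hv : IntervalIntegrable (fun x => ‖v x‖ ^ 2) volume a b)
    (hw : IntervalIntegrable (fun x => ‖w x‖ ^ 2) volume a b) :
    (∫ x in a..b, f x * (starRingEnd ℂ) (v x) - g x * (starRingEnd ℂ) (w x)).re
      ≤ √(∫ x in a..b, ‖f x‖ ^ 2) * √(∫ x in a..b, ‖v x‖ ^ 2)
        + √(∫ x in a..b, ‖g x‖ ^ 2) * √(∫ x in a..b, ‖w x‖ ^ 2) := by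
  -- `f` and `g` need not be measurable, so the integrand is bounded by an integrable majorant
  -- instead of being split.
  have hfv := hf.norm_mul_norm_of_norm_sq hv
  have hgw := hg.norm_mul_norm_of_norm_sq hw
  calc (∫ x in a..b, f x * (starRingEnd ℂ) (v x) - g x * (starRingEnd ℂ) (w x)).re
      ≤ ‖∫ x in a..b, f x * (starRingEnd ℂ) (v x) - g x * (starRingEnd ℂ) (w x)‖ :=
        re_le_norm _
    _ ≤ ∫ x in a..b, ‖f x‖ * ‖v x‖ + ‖g x‖ * ‖w x‖ := by
        refine intervalIntegral.norm_integral_le_of_norm_le hab (ae_of_all _ fun x _ => ?_)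
          (hfv.add hgw)
        refine (norm_sub_le _ _).trans_eq ?_
        rw [norm_mul, norm_mul, RCLike.norm_conj, RCLike.norm_conj]
    _ = (∫ x in a..b, ‖f x‖ * ‖v x‖) + ∫ x in a..b, ‖g x‖ * ‖w x‖ :=
        intervalIntegral.integral_add hfv hgw
    _ ≤ _ := add_le_add
        (intervalIntegral.integral_norm_mul_norm_le_sqrt_mul_sqrt hab hf hv)
        (intervalIntegral.integral_norm_mul_norm_le_sqrt_mul_sqrt hab hg hw)

theorem sqrt_le_of_le_mul_sqrt {A c : ℝ} (hA : 0 ≤ A) (hc : 0 ≤ c) (h : A ≤ c * √A) : √A ≤ c := by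
  nlinarith [Real.sq_sqrt hA, Real.sqrt_nonneg A]

theorem stmt_4 :
    ∃ C > 0, ∀ (lam : ℝ) (k : ℕ) (a : ℝ → ℝ) (u f g : ℝ → ℂ),
      |lam| ≤ (k : ℝ) →
      ContinuousOn a (Set.Icc 0 1) → (∀ x ∈ Set.Icc (0:ℝ) 1, 0 ≤ a x) →
      ContDiff ℝ 1 u → u 0 = 0 → u 1 = 0 →
      IntervalIntegrable (fun x => ‖f x‖ ^ 2) volume 0 1 →
      IntervalIntegrable (fun x => ‖g x‖ ^ 2) volume 0 1 →
      WeakSol1D lam k a u f g →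
      Real.sqrt (∫ x in (0:ℝ)..1, ‖u x‖ ^ 2)
        ≤ C * (Real.sqrt (∫ x in (0:ℝ)..1, ‖f x‖ ^ 2)
             + Real.sqrt (∫ x in (0:ℝ)..1, ‖g x‖ ^ 2)) := by
  refine ⟨1, one_pos, fun lam k a u f g hlk ha _ hu hu0 hu1 hf hg hweak => ?_⟩
  have hbound := re_integral_mul_conj_sub_mul_conj_le zero_le_one hf hg
    ((hu.continuous.norm.pow 2).intervalIntegrable 0 1)
    (((hu.continuous_deriv le_rfl).norm.pow 2).intervalIntegrable 0 1)
  rw [← hweak.energy_identity ha hu hu0 hu1] at hbound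
  have hBA := integral_norm_sq_le_integral_norm_deriv_sq hu hu0
  set A := ∫ x in (0:ℝ)..1, ‖deriv u x‖ ^ 2
  set B := ∫ x in (0:ℝ)..1, ‖u x‖ ^ 2
  set F := √(∫ x in (0:ℝ)..1, ‖f x‖ ^ 2)
  set G := √(∫ x in (0:ℝ)..1, ‖g x‖ ^ 2)
  have hA : 0 ≤ A := intervalIntegral.integral_nonneg zero_le_one fun x _ => by positivity
  have hB : 0 ≤ B := intervalIntegral.integral_nonneg zero_le_one fun x _ => by positivity
  have hcoeff : 0 ≤ (k:ℝ)^2 - lam^2 := by nlinarith [abs_nonneg lam, sq_abs lam]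
  have hA_le : A ≤ (F + G) * √A := calc
    A ≤ A + ((k:ℝ)^2 - lam^2) * B := le_add_of_nonneg_right (mul_nonneg hcoeff hB)
    _ ≤ F * √B + G * √A := hbound
    _ ≤ F * √A + G * √A := by gcongr
    _ = (F + G) * √A := by ring
  rw [one_mul]
  exact (Real.sqrt_le_sqrt hBA).trans (sqrt_le_of_le_mul_sqrt hA (by positivity) hA_le)
end
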